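/- arXiv:1212.3547 — 7 statements merged into one kernel-verified Lean document; each statement's English description precedes it below -/
import Mathlib

section
/- The codimension of any twisted sector Y of M_{g,n} satisfies codim(Y) ≥ g − 2 + n, with equality if and only if Y is the hyperelliptic twisted sector with n marked Weierstrass points. Concretely: for every (g,n)-admissible datum, 3g − 3g' − Σ_{i=1}^{N−1} d_i + n ≥ g − 2 + n, and equality holds if and only if the datum is (g' = 0, N = 2, d_1 = 2g + 2, a_1 = n). -/
open Finset

/-- `σ(k,i)` for modulus `N`: `0` if `k·i + gcd(i,N) ≡ 0 (mod N)`, `1` otherwise. -/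
def sigmaFn (N k i : ℕ) : ℚ :=
  if (k * i + Nat.gcd i N) % N = 0 then 0 else 1

/-- The age formula for a datum `(g', N; d_1,…,d_{N-1}; a_1,…,a_{N-1})`. -/
def age (g' N : ℕ) (d a : ℕ → ℕ) : ℚ :=
  (3 * (g' : ℚ) - 3) * ((N : ℚ) - 1) / 2
  + (1 / (N : ℚ)) * ∑ i ∈ (Icc 1 (N - 1)).filter (fun i => Nat.gcd i N = 1),
      (a i : ℚ) * ∑ k ∈ Icc 1 (N - 1), (k : ℚ) * sigmaFn N k i
  + (1 / (N : ℚ)) * ∑ i ∈ Icc 1 (N - 1),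
      (d i : ℚ) * ∑ k ∈ Icc 1 (N - 1),
        (k : ℚ) * (Int.fract ((k : ℚ) * (i : ℚ) / (N : ℚ)) + sigmaFn N k i)

/-- The codimension `3g − 3g' − Σ d_i + n` of the datum in `M_{g,n}`. -/
def codim (g n g' N : ℕ) (d : ℕ → ℕ) : ℚ :=
  3 * (g : ℚ) - 3 * (g' : ℚ) - ∑ i ∈ Icc 1 (N - 1), (d i : ℚ) + (n : ℚ)

/-- The twin substitution `d_i ↦ d_{N−i}`. -/
def twin (N : ℕ) (d : ℕ → ℕ) : ℕ → ℕ := fun i => d (N - i)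

/-- A `(g,n)`-admissible datum `(g', N; d_1,…,d_{N-1}; a_1,…,a_{N-1})`. -/
def Admissible (g n g' N : ℕ) (d a : ℕ → ℕ) : Prop :=
  2 ≤ N ∧
  -- (rh) Riemann–Hurwitz
  (2 * (g : ℤ) - 2 = (N : ℤ) * (2 * (g' : ℤ) - 2)
      + ∑ i ∈ Icc 1 (N - 1), ((N : ℤ) - (Nat.gcd i N : ℤ)) * (d i : ℤ)) ∧
  -- (fan)
  ((N : ℤ) ∣ ∑ i ∈ Icc 1 (N - 1), (i : ℤ) * (d i : ℤ)) ∧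
  -- (mp)
  (∑ i ∈ Icc 1 (N - 1), a i = n) ∧
  (∀ i ∈ Icc 1 (N - 1), a i ≤ d i) ∧
  (∀ i ∈ Icc 1 (N - 1), Nat.gcd i N ≠ 1 → a i = 0) ∧
  -- (ne)
  (n = 0 → g' = 0 →
    Nat.gcd N (((Icc 1 (N - 1)).filter (fun i => d i ≠ 0)).gcd id) = 1)

/-- The datum is the hyperelliptic twisted sector with `n` marked Weierstrass points:
`g' = 0`, `N = 2`, `d_1 = 2g+2`, `a_1 = n`. -/
def IsHyperelliptic (g n g' N : ℕ) (d a : ℕ → ℕ) : Prop :=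
  g' = 0 ∧ N = 2 ∧ d 1 = 2 * g + 2 ∧ a 1 = n

/-!
Put `T = Σ d_i`. Since `gcd(i,N) ≤ N/2` for `0 < i < N`, Riemann–Hurwitz can be written as
`4g - 4 = N (T + 4g' - 4) + E` with a defect `E ≥ (N - 2) n ≥ 0`, the marked points lying over
indices coprime to `N`. For `g = 0` and `n ≥ 3` this is impossible; for `g ≥ 1` it gives
`T + 4g' ≤ 2g + 2`, stronger than `codim ≥ g - 2 + n`, i.e. `T + 3g' ≤ 2g + 2`. Equality forces
`g' = 0`, `T = 2g + 2` and `E = 0`. Then every branch point has `i = N/2`, and a marked point there,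
or condition (ne) when `n = 0`, forces `N/2 = 1`.
-/

namespace Nat

theorem two_mul_gcd_le {i N : ℕ} (hi : 0 < i) (hiN : i < N) : 2 * gcd i N ≤ N := by
  by_contra! h
  have hN : N = gcd i N := eq_of_dvd_of_lt_two_mul (by omega) (gcd_dvd_right i N) h
  have : N ≤ i := le_of_dvd hi (hN ▸ gcd_dvd_left i N)
  omega

theorem two_mul_eq_of_two_mul_gcd_eq {i N : ℕ} (hi : 0 < i) (hiN : i < N)
    (h : 2 * gcd i N = N) : 2 * i = N := by
  have := eq_of_dvd_of_lt_two_mul hi.ne' (gcd_dvd_left i N) (by omega)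
  omega

end Nat

/-- Twice the Riemann–Hurwitz sum `Σ (N - gcd(i,N)) d_i` minus its smallest possible value
`N Σ d_i` (recall `gcd(i,N) ≤ N/2`). -/
def gcdDefect (N : ℕ) (d : ℕ → ℕ) : ℤ :=
  ∑ i ∈ Icc 1 (N - 1), ((N : ℤ) - 2 * Nat.gcd i N) * d i

theorem gcdDefect_term_nonneg {N i : ℕ} (hi : i ∈ Icc 1 (N - 1)) (x : ℕ) :
    0 ≤ ((N : ℤ) - 2 * Nat.gcd i N) * x := by
  rw [mem_Icc] at hi
  have := Nat.two_mul_gcd_le (i := i) (N := N) (by omega) (by omega)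
  exact mul_nonneg (by omega) (Int.natCast_nonneg x)

theorem gcdDefect_nonneg (N : ℕ) (d : ℕ → ℕ) : 0 ≤ gcdDefect N d :=
  sum_nonneg fun _ hi => gcdDefect_term_nonneg hi _

theorem two_mul_eq_of_gcdDefect_eq_zero {N : ℕ} {d : ℕ → ℕ} (h : gcdDefect N d = 0) {i : ℕ}
    (hi : i ∈ Icc 1 (N - 1)) (hdi : d i ≠ 0) : 2 * i = N := by
  have hterm := (sum_eq_zero_iff_of_nonneg fun _ hj => gcdDefect_term_nonneg hj _).1 h i hi
  have hgcd : (N : ℤ) - 2 * Nat.gcd i N = 0 := (mul_eq_zero.1 hterm).resolve_right (by omega)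
  rw [mem_Icc] at hi
  exact Nat.two_mul_eq_of_two_mul_gcd_eq (by omega) (by omega) (by omega)

namespace Admissible

variable {g n g' N : ℕ} {d a : ℕ → ℕ}

theorem le_sum (h : Admissible g n g' N d a) : n ≤ ∑ i ∈ Icc 1 (N - 1), d i := by
  obtain ⟨-, -, -, hsum, hle, -⟩ := h
  exact hsum ▸ sum_le_sum hle

theorem sub_two_mul_le_gcdDefect (h : Admissible g n g' N d a) :
    ((N : ℤ) - 2) * n ≤ gcdDefect N d := by
  obtain ⟨hN, -, -, hsum, hle, hcop, -⟩ := h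
  rw [← hsum, Nat.cast_sum, mul_sum]
  refine sum_le_sum fun i hi => ?_
  by_cases hi1 : Nat.gcd i N = 1
  · rw [hi1]
    have := hle i hi
    exact mul_le_mul_of_nonneg_left (by exact_mod_cast this) (by omega)
  · rw [hcop i hi hi1, Nat.cast_zero, mul_zero]
    exact gcdDefect_term_nonneg hi _

theorem riemann_hurwitz_gcdDefect (h : Admissible g n g' N d a) :
    4 * (g : ℤ) - 4 =
      N * ((∑ i ∈ Icc 1 (N - 1), d i : ℕ) + 4 * g' - 4) + gcdDefect N d := by
  obtain ⟨-, hrh, -⟩ := h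
  have hsplit : gcdDefect N d = 2 * ∑ i ∈ Icc 1 (N - 1), ((N : ℤ) - Nat.gcd i N) * d i
      - N * ∑ i ∈ Icc 1 (N - 1), (d i : ℤ) := by
    simp only [gcdDefect, mul_sum, ← sum_sub_distrib]
    exact sum_congr rfl fun _ _ => by ring
  rw [hsplit, Nat.cast_sum]
  linear_combination 2 * hrh

theorem genus_pos (h : Admissible g n g' N d a) (hgn : 2 < 2 * g + n) : 0 < g := by
  refine Nat.pos_of_ne_zero fun hg => ?_
  subst hg
  have hN : (2 : ℤ) ≤ N := by exact_mod_cast h.1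
  have hn : (3 : ℤ) ≤ n := by omega
  have hrh := h.riemann_hurwitz_gcdDefect
  have hdef := h.sub_two_mul_le_gcdDefect
  have hnT : (n : ℤ) ≤ (∑ i ∈ Icc 1 (N - 1), d i : ℕ) := by exact_mod_cast h.le_sum
  set T : ℤ := ((∑ i ∈ Icc 1 (N - 1), d i : ℕ) : ℤ)
  push_cast at hrh
  nlinarith [mul_nonneg (by omega : (0 : ℤ) ≤ N) (by omega : (0 : ℤ) ≤ T - n),
    mul_nonneg (by omega : (0 : ℤ) ≤ N) (by omega : (0 : ℤ) ≤ g'),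
    mul_nonneg (by omega : (0 : ℤ) ≤ N - 2) (by omega : (0 : ℤ) ≤ n - 3)]

/-- Riemann–Hurwitz rearranges to `4(g+1) - 2(Σ d_i + 4g') = (N - 2) Y + gcdDefect N d` with
`Y = Σ d_i + 4g' - 4`; when `Y < 0` the bound holds anyway since `g ≥ 1`. -/
theorem sum_add_four_mul_le (h : Admissible g n g' N d a) (hg : 0 < g) :
    ∑ i ∈ Icc 1 (N - 1), d i + 4 * g' ≤ 2 * g + 2 := by
  have hN : (2 : ℤ) ≤ N := by exact_mod_cast h.1
  have hrh := h.riemann_hurwitz_gcdDefect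
  have hdef := gcdDefect_nonneg N d
  set T := ∑ i ∈ Icc 1 (N - 1), d i
  suffices (T : ℤ) + 4 * g' ≤ 2 * g + 2 by omega
  rcases lt_or_ge ((T : ℤ) + 4 * g' - 4) 0 with hY | hY
  · omega
  · nlinarith

theorem gcdDefect_eq_zero (h : Admissible g n g' N d a) (hg : 0 < g) (hg' : g' = 0)
    (hT : ∑ i ∈ Icc 1 (N - 1), d i = 2 * g + 2) : gcdDefect N d = 0 := by
  have hN : (2 : ℤ) ≤ N := by exact_mod_cast h.1
  have hrh := h.riemann_hurwitz_gcdDefect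
  rw [hT, hg'] at hrh
  push_cast at hrh
  have hdef := gcdDefect_nonneg N d
  nlinarith

theorem eq_two_of_gcdDefect_eq_zero (h : Admissible g n g' N d a) (hg' : g' = 0)
    (hdef : gcdDefect N d = 0) (hd : ∃ i ∈ Icc 1 (N - 1), d i ≠ 0) : N = 2 := by
  obtain ⟨-, -, -, hsum, hle, hcop, hne⟩ := h
  have hhalf := fun i => two_mul_eq_of_gcdDefect_eq_zero hdef (i := i)
  obtain ⟨i₀, hi₀, hdi₀⟩ := hd
  have hi₀N := hhalf i₀ hi₀ hdi₀
  suffices i₀ = 1 by omega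
  rcases eq_or_ne n 0 with hn | hn
  · have hdvd : i₀ ∣ ((Icc 1 (N - 1)).filter (fun i => d i ≠ 0)).gcd id :=
      Finset.dvd_gcd fun j hj => by
        rw [mem_filter] at hj
        have := hhalf j hj.1 hj.2
        exact dvd_of_eq (show i₀ = j by omega)
    have hcoprime := hne hn hg'
    exact Nat.dvd_one.1 (hcoprime ▸ Nat.dvd_gcd ⟨2, by omega⟩ hdvd)
  · obtain ⟨i, hi, hai⟩ : ∃ i ∈ Icc 1 (N - 1), a i ≠ 0 := by
      by_contra! h0
      exact hn (hsum ▸ sum_eq_zero h0)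
    have hi1 : Nat.gcd i N = 1 := by
      by_contra hi1
      exact hai (hcop i hi hi1)
    have hiN := hhalf i hi (by have := hle i hi; omega)
    rw [← hiN, Nat.gcd_mul_left_right] at hi1
    omega

theorem isHyperelliptic (h : Admissible g n g' N d a) (hg : 0 < g) (hg' : g' = 0)
    (hT : ∑ i ∈ Icc 1 (N - 1), d i = 2 * g + 2) : IsHyperelliptic g n g' N d a := by
  have hd : ∃ i ∈ Icc 1 (N - 1), d i ≠ 0 := by
    by_contra! h0
    rw [sum_eq_zero h0] at hT
    omega
  obtain rfl := h.eq_two_of_gcdDefect_eq_zero hg' (h.gcdDefect_eq_zero hg hg' hT) hd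
  obtain ⟨-, -, -, hsum, -⟩ := h
  simp only [Nat.reduceSub, Icc_self, sum_singleton] at hT hsum
  exact ⟨hg', rfl, hT, hsum⟩

end Admissible

/-- For every `(g,n)`-admissible datum, `codim ≥ g − 2 + n`, with
equality iff the datum is the hyperelliptic twisted sector with `n` marked
Weierstrass points. -/
theorem codim_ge_bound (g n g' N : ℕ) (d a : ℕ → ℕ)
    (hgn : 2 < 2 * g + n) (hadm : Admissible g n g' N d a) :
    (g : ℚ) - 2 + (n : ℚ) ≤ codim g n g' N d ∧
    (codim g n g' N d = (g : ℚ) - 2 + (n : ℚ) ↔ IsHyperelliptic g n g' N d a) := by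
  have hg := hadm.genus_pos hgn
  have hle := hadm.sum_add_four_mul_le hg
  set T := ∑ i ∈ Icc 1 (N - 1), d i with hT
  have hcodim : codim g n g' N d - (g - 2 + n) = 2 * g + 2 - 3 * g' - (T : ℚ) := by
    simp only [codim, hT, Nat.cast_sum]
    ring
  refine ⟨?_, fun heq => ?_, fun hyp => ?_⟩
  · have : (T : ℚ) + 3 * g' ≤ 2 * g + 2 := by exact_mod_cast (by omega : T + 3 * g' ≤ 2 * g + 2)
    linarith
  · have : T + 3 * g' = 2 * g + 2 := by
      exact_mod_cast (by linarith : (T : ℚ) + 3 * g' = 2 * g + 2)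
    exact hadm.isHyperelliptic hg (by omega) (by omega)
  · obtain ⟨rfl, rfl, hd, -⟩ := hyp
    simp only [codim, Nat.reduceSub, Icc_self, sum_singleton, hd]
    push_cast
    ring
end

section
/- If n > 2g + 2 then there exists no (g,n)-admissible datum. (In particular M_{g,n} has no twisted sectors for n > 2g + 2.) -/
open Finset

/-! A marked point lies over a branch point of type `i` with `gcd(i, N) = 1`, which contributes
the maximal amount `N - 1` to the Riemann–Hurwitz sum. Hence `n (N - 1) ≤ 2g - 2 - N(2g' - 2)
≤ 2g - 2 + 2N`, i.e. `(n - 2)(N - 1) ≤ 2g`, and `N ≥ 2` forces `n ≤ 2g + 2`. -/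

theorem mul_pred_le_sub_gcd_mul {N i a d : ℕ} (hN : 0 < N) (had : a ≤ d)
    (hcoprime : Nat.gcd i N ≠ 1 → a = 0) :
    (a : ℤ) * (N - 1) ≤ (N - Nat.gcd i N) * d := by
  by_cases hi : Nat.gcd i N = 1
  · rw [hi, Nat.cast_one, mul_comm]
    exact mul_le_mul_of_nonneg_left (by exact_mod_cast had) (by omega)
  · rw [hcoprime hi, Nat.cast_zero, zero_mul]
    have : Nat.gcd i N ≤ N := Nat.gcd_le_right i hN
    exact mul_nonneg (by omega) (Nat.cast_nonneg _)

theorem Admissible.marked_mul_pred_le_ramification {g n g' N : ℕ} {d a : ℕ → ℕ}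
    (hA : Admissible g n g' N d a) :
    (n : ℤ) * (N - 1) ≤ ∑ i ∈ Icc 1 (N - 1), ((N : ℤ) - Nat.gcd i N) * d i := by
  obtain ⟨hN, -, -, hsum, hle, hzero, -⟩ := hA
  rw [← hsum, Nat.cast_sum, sum_mul]
  exact sum_le_sum fun i hi => mul_pred_le_sub_gcd_mul (by omega) (hle i hi) (hzero i hi)

theorem no_admissible_datum_of_many_marked_points_general (g n : ℕ)
    (h : 2 * g + 2 < n) :
    ¬ ∃ (g' N : ℕ) (d a : ℕ → ℕ), Admissible g n g' N d a := by
  rintro ⟨g', N, d, a, hA⟩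
  have hmarked := hA.marked_mul_pred_le_ramification
  obtain ⟨hN, hrh, -⟩ := hA
  have hbound : ((n : ℤ) - 2) * (N - 1) ≤ 2 * g := by
    have : (0 : ℤ) ≤ N * g' := by positivity
    linarith
  have hN' : (1 : ℤ) ≤ N - 1 := by omega
  have hn : (2 * g + 1 : ℤ) ≤ n - 2 := by omega
  nlinarith

/-- If `n > 2g + 2` then there is no `(g,n)`-admissible datum. -/
theorem no_admissible_datum_of_many_marked_points (g n : ℕ)
    (hgn : 2 < 2 * g + n) (h : 2 * g + 2 < n) :
    ¬ ∃ (g' N : ℕ) (d a : ℕ → ℕ), Admissible g n g' N d a :=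
  no_admissible_datum_of_many_marked_points_general g n h
end

section
/- For every (g,n)-admissible datum Y with twin datum Y', the marked-point contributions to the ages satisfy |a_mark(Y) − a_mark(Y')| ≤ ((N − 2)/N) · Σ_{i: gcd(i,N)=1} a_i. -/
open Finset

/-- The marked-point contribution `a_mark` to the age. -/
def ageMark (N : ℕ) (a : ℕ → ℕ) : ℚ :=
  (1 / (N : ℚ)) * ∑ i ∈ (Icc 1 (N - 1)).filter (fun i => Nat.gcd i N = 1),
      (a i : ℚ) * ∑ k ∈ Icc 1 (N - 1), (k : ℚ) * sigmaFn N k i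


/-!
For `i` coprime to `N`, `σ(k,i)` vanishes for exactly one `k ∈ [1, N-1]`, the residue `c(i)` of
`-i⁻¹` mod `N`, so the inner sum of `a_mark` is `N(N-1)/2 - c(i)`. As `c(N-i) = N - c(i)`,
reindexing the twin's sum by `i ↦ N - i` turns the difference of the two contributions into
`(1/N) Σ a_i (N - 2c(i))`, and `1 ≤ c(i) ≤ N - 1` gives `|N - 2c(i)| ≤ N - 2`.
-/

def negInvRep (N i : ℕ) : ℕ := (-(i : ZMod N)⁻¹).val

def sigmaWeight (N i : ℕ) : ℚ := ∑ k ∈ Icc 1 (N - 1), (k : ℚ) * sigmaFn N k i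

theorem ageMark_eq_sum_sigmaWeight (N : ℕ) (a : ℕ → ℕ) :
    ageMark N a = 1 / N * ∑ i ∈ (Icc 1 (N - 1)).filter (fun i => Nat.gcd i N = 1),
      (a i : ℚ) * sigmaWeight N i :=
  rfl

section
variable {N i : ℕ}

theorem mul_add_one_mod_eq_zero_iff_eq_negInvRep (hco : i.Coprime N) {k : ℕ} (hk : k < N) :
    (k * i + 1) % N = 0 ↔ k = negInvRep N i := by
  have : NeZero N := ⟨by omega⟩
  have hinv : (i : ZMod N) * (i : ZMod N)⁻¹ = 1 :=
    ZMod.mul_inv_of_unit _ ((ZMod.isUnit_iff_coprime i N).2 hco)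
  calc (k * i + 1) % N = 0
      ↔ (k : ZMod N) * i + 1 = 0 := by
        rw [← Nat.dvd_iff_mod_eq_zero, ← ZMod.natCast_eq_zero_iff]; push_cast; rfl
    _ ↔ (k : ZMod N) = -(i : ZMod N)⁻¹ := by
        constructor <;> intro h
        · linear_combination (i : ZMod N)⁻¹ * h - (k : ZMod N) * hinv
        · linear_combination (i : ZMod N) * h - hinv
    _ ↔ k = negInvRep N i := by
        constructor
        · intro h; rw [negInvRep, ← h, ZMod.val_natCast_of_lt hk]
        · rintro rfl; exact ZMod.natCast_zmod_val _

theorem negInvRep_lt (hN : 0 < N) : negInvRep N i < N :=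
  have : NeZero N := ⟨hN.ne'⟩
  ZMod.val_lt _

theorem negInvRep_pos (hN : 1 < N) (hco : i.Coprime N) : 0 < negInvRep N i := by
  by_contra! h
  have := (mul_add_one_mod_eq_zero_iff_eq_negInvRep hco (k := 0) (by omega)).2 (by omega)
  rw [zero_mul, zero_add, Nat.mod_eq_of_lt hN] at this
  exact one_ne_zero this

theorem negInvRep_sub_add (hN : 1 < N) (hco : i.Coprime N) (hi : i ≤ N) :
    negInvRep N (N - i) + negInvRep N i = N := by
  set c := negInvRep N i
  have hc : c < N := negInvRep_lt (by omega)
  have hco' : (N - i).Coprime N := (Nat.coprime_self_sub_left hi).2 hco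
  suffices N - c = negInvRep N (N - i) by omega
  rw [← mul_add_one_mod_eq_zero_iff_eq_negInvRep hco' (by have := negInvRep_pos hN hco; omega),
    ← Nat.dvd_iff_mod_eq_zero, ← ZMod.natCast_eq_zero_iff]
  have hspec := (mul_add_one_mod_eq_zero_iff_eq_negInvRep hco hc).2 rfl
  rw [← Nat.dvd_iff_mod_eq_zero, ← ZMod.natCast_eq_zero_iff] at hspec
  push_cast [hc.le, hi] at hspec ⊢
  linear_combination hspec + ((N : ZMod N) - c - i) * ZMod.natCast_self N

theorem sigmaWeight_eq_sum_sub_negInvRep (hN : 1 < N) (hco : i.Coprime N) :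
    sigmaWeight N i = ∑ k ∈ Icc 1 (N - 1), (k : ℚ) - negInvRep N i := by
  have hterm : ∀ k ∈ Icc 1 (N - 1), (k : ℚ) * sigmaFn N k i
      = k - if k = negInvRep N i then (k : ℚ) else 0 := by
    intro k hk
    have hkN : k < N := by simp only [mem_Icc] at hk; omega
    simp only [sigmaFn, hco.gcd_eq_one, mul_add_one_mod_eq_zero_iff_eq_negInvRep hco hkN]
    split_ifs <;> ring
  have hmem : negInvRep N i ∈ Icc 1 (N - 1) := by
    have := negInvRep_pos hN hco; have := negInvRep_lt (i := i) (by omega : 0 < N)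
    simp only [mem_Icc]; omega
  rw [sigmaWeight, sum_congr rfl hterm, sum_sub_distrib, sum_ite_eq', if_pos hmem]

theorem abs_sigmaWeight_sub_le (hN : 1 < N) (hco : i.Coprime N) (hi : i ≤ N) :
    |sigmaWeight N i - sigmaWeight N (N - i)| ≤ N - 2 := by
  have hco' : (N - i).Coprime N := (Nat.coprime_self_sub_left hi).2 hco
  have hsum : (negInvRep N (N - i) : ℚ) + negInvRep N i = N := by
    exact_mod_cast negInvRep_sub_add hN hco hi
  have hpos : (1 : ℚ) ≤ negInvRep N i := by exact_mod_cast negInvRep_pos hN hco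
  have hpos' : (1 : ℚ) ≤ negInvRep N (N - i) := by exact_mod_cast negInvRep_pos hN hco'
  rw [sigmaWeight_eq_sum_sub_negInvRep hN hco, sigmaWeight_eq_sum_sub_negInvRep hN hco', abs_le]
  constructor <;> linarith

end

theorem sum_coprime_reflect {M : Type*} [AddCommMonoid M] (N : ℕ) (f : ℕ → ℕ → M) :
    ∑ i ∈ (Icc 1 (N - 1)).filter (fun i => Nat.gcd i N = 1), f (N - i) i
      = ∑ i ∈ (Icc 1 (N - 1)).filter (fun i => Nat.gcd i N = 1), f i (N - i) := by
  have hmaps : ∀ i ∈ (Icc 1 (N - 1)).filter (fun i => Nat.gcd i N = 1),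
      N - i ∈ (Icc 1 (N - 1)).filter (fun i => Nat.gcd i N = 1) := by
    intro i hi
    simp only [mem_filter, mem_Icc] at hi ⊢
    rw [Nat.gcd_self_sub_left (by omega)]
    omega
  refine sum_nbij' (N - ·) (N - ·) hmaps hmaps ?_ ?_ ?_ <;>
    intro i hi <;> simp only [mem_filter, mem_Icc] at hi
  · omega
  · omega
  · rw [Nat.sub_sub_self (by omega)]

theorem abs_ageMark_sub_le_general (g n g' N : ℕ) (d a : ℕ → ℕ)
    (hadm : Admissible g n g' N d a) :
    |ageMark N a - ageMark N (twin N a)|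
      ≤ ((N : ℚ) - 2) / (N : ℚ)
        * ∑ i ∈ (Icc 1 (N - 1)).filter (fun i => Nat.gcd i N = 1), (a i : ℚ) := by
  have hN : 1 < N := hadm.1
  set P := (Icc 1 (N - 1)).filter (fun i => Nat.gcd i N = 1)
  have hdiff : ageMark N a - ageMark N (twin N a)
      = 1 / N * ∑ i ∈ P, (a i : ℚ) * (sigmaWeight N i - sigmaWeight N (N - i)) := by
    simp only [ageMark_eq_sum_sigmaWeight, twin, mul_sub, sum_sub_distrib]
    rw [sum_coprime_reflect N (fun j i => (a j : ℚ) * sigmaWeight N i)]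
  have hterm : ∀ i ∈ P, |(a i : ℚ) * (sigmaWeight N i - sigmaWeight N (N - i))|
      ≤ a i * ((N : ℚ) - 2) := by
    intro i hi
    simp only [P, mem_filter, mem_Icc] at hi
    rw [abs_mul, Nat.abs_cast]
    exact mul_le_mul_of_nonneg_left (abs_sigmaWeight_sub_le hN hi.2 (by omega)) (by positivity)
  calc |ageMark N a - ageMark N (twin N a)|
      ≤ 1 / N * ∑ i ∈ P, (a i : ℚ) * ((N : ℚ) - 2) := by
        rw [hdiff, abs_mul, abs_of_pos (by positivity)]
        gcongr
        exact (abs_sum_le_sum_abs _ _).trans (sum_le_sum hterm)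
    _ = ((N : ℚ) - 2) / N * ∑ i ∈ P, (a i : ℚ) := by
        rw [← sum_mul]; ring

/-- For every `(g,n)`-admissible datum and its twin,
`|a_mark(Y) − a_mark(Y')| ≤ ((N − 2)/N)·Σ_{gcd(i,N)=1} a_i`. -/
theorem abs_ageMark_sub_le (g n g' N : ℕ) (d a : ℕ → ℕ)
    (hgn : 2 < 2 * g + n) (hadm : Admissible g n g' N d a) :
    |ageMark N a - ageMark N (twin N a)|
      ≤ ((N : ℚ) - 2) / (N : ℚ)
        * ∑ i ∈ (Icc 1 (N - 1)).filter (fun i => Nat.gcd i N = 1), (a i : ℚ) :=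
  abs_ageMark_sub_le_general g n g' N d a hadm
end

section
/- For every (g,n)-admissible datum Y with twin datum Y', and every proper divisor σ of N, the σ-parts of the ages satisfy |a_σ(Y) − a_σ(Y')| ≤ ((N − 2σ)(N/σ + 5))/(6N) · Σ_{i: gcd(i,N)=σ} d_i. -/
open Finset

/-- The `σ`-part `a_σ` of the age. -/
def ageSigma (N s : ℕ) (d : ℕ → ℕ) : ℚ :=
  (1 / (N : ℚ)) * ∑ i ∈ (Icc 1 (N - 1)).filter (fun i => Nat.gcd i N = s),
      (d i : ℚ) * ∑ k ∈ Icc 1 (N - 1),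
        (k : ℚ) * (Int.fract ((k : ℚ) * (i : ℚ) / (N : ℚ)) + sigmaFn N k i)

/-!
Write `N = s m` and `i = s j` with `gcd(j, m) = 1`. The `k`-th summand of the inner sum of `a_σ`
depends only on the residue `k j mod m`, and summing over the `s` blocks of length `m` shows that
the contribution of `i` minus that of `N - i` is `s` times the same difference for `(m, j)`.
For `v = u j mod m` the residue of `u (m - j)` is `m - v`, so that difference splits into
`(1 / 2m) Σ (2u - m)(2v - m)`, which is at most `(1 / 2m) Σ (2u - m)² = (m - 1)(m - 2) / 6` by
Cauchy–Schwarz because `u ↦ v` permutes `{1, …, m - 1}`, plus the difference of the preimages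
of `1` and `m - 1`, which is at most `m - 2`. Altogether the bound per index is
`s (m - 2)(m + 5) / 6`.
-/

section Combinatorics

variable {ι : Type*}

theorem sum_comp_eq_of_bijOn {M : Type*} [AddCommMonoid M] {s : Finset ι} {f : ι → ι}
    (hf : Set.BijOn f s s) (g : ι → M) : ∑ u ∈ s, g (f u) = ∑ u ∈ s, g u :=
  Finset.sum_nbij f (fun _ hu => hf.mapsTo hu) hf.injOn hf.surjOn fun _ _ => rfl

theorem sum_ite_apply_eq_of_injOn {κ M : Type*} [AddCommMonoid M] [DecidableEq κ]
    {s : Finset ι} {f : ι → κ} (hf : Set.InjOn f s) {u : ι} (hu : u ∈ s) (g : ι → M) :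
    ∑ w ∈ s, (if f w = f u then g w else 0) = g u := by
  rw [Finset.sum_eq_single_of_mem u hu fun w hw hwu => if_neg fun h => hwu (hf hw hu h),
    if_pos rfl]

theorem abs_sum_mul_comp_le_sum_sq {R : Type*} [CommRing R] [LinearOrder R]
    [IsStrictOrderedRing R] {s : Finset ι} {f : ι → ι} (hf : Set.BijOn f s s) (x : ι → R) :
    |∑ u ∈ s, x u * x (f u)| ≤ ∑ u ∈ s, x u ^ 2 := by
  have hcs := Finset.sum_mul_sq_le_sq_mul_sq s x (x ∘ f)
  rw [Function.comp_def, sum_comp_eq_of_bijOn hf fun u => x u ^ 2, ← sq] at hcs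
  exact abs_le_of_sq_le_sq hcs (Finset.sum_nonneg fun _ _ => sq_nonneg _)

end Combinatorics

theorem sum_range_mul_mul_mod_of_sum_eq_zero {R : Type*} [CommRing R] (m s : ℕ) (H : ℕ → R)
    (hH : ∑ u ∈ range m, H u = 0) :
    ∑ k ∈ range (s * m), (k : R) * H (k % m) = s * ∑ u ∈ range m, (u : R) * H u := by
  induction s with
  | zero => simp
  | succ t ih =>
    have hshift : ∀ u ∈ range m, ((t * m + u : ℕ) : R) * H ((t * m + u) % m)
        = (t * m : R) * H u + u * H u := fun u hu => by
      rw [Nat.mul_add_mod_of_lt (mem_range.mp hu)]; push_cast; ring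
    rw [Nat.succ_mul, Finset.sum_range_add, ih, Finset.sum_congr rfl hshift,
      Finset.sum_add_distrib, ← Finset.mul_sum, hH]
    push_cast; ring

theorem bijOn_mul_mod_range {j m : ℕ} (hc : j.Coprime m) :
    Set.BijOn (fun u => u * j % m) (range m) (range m) := by
  refine ((Set.toFinite _).injOn_iff_bijOn_of_mapsTo ?_).mp ?_
  · intro u hu
    simp only [coe_range, Set.mem_Iio] at hu ⊢
    exact Nat.mod_lt _ (by omega)
  · intro u hu w hw h
    simp only [coe_range, Set.mem_Iio] at hu hw
    simpa [Nat.ModEq, Nat.mod_eq_of_lt hu, Nat.mod_eq_of_lt hw] using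
      Nat.ModEq.cancel_right_of_coprime hc.symm h

theorem bijOn_mul_mod_Ico {j m : ℕ} (hc : j.Coprime m) :
    Set.BijOn (fun u => u * j % m) (Ico 1 m) (Ico 1 m) := by
  refine ((Set.toFinite _).injOn_iff_bijOn_of_mapsTo ?_).mp ?_
  · intro u hu
    simp only [coe_Ico, Set.mem_Ico] at hu ⊢
    refine ⟨Nat.pos_of_ne_zero fun h0 => ?_, Nat.mod_lt _ (by omega)⟩
    have hmu : m ∣ u := hc.symm.dvd_of_dvd_mul_right (Nat.dvd_of_mod_eq_zero h0)
    have := Nat.le_of_dvd (by omega) hmu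
    omega
  · exact (bijOn_mul_mod_range hc).injOn.mono (by simp [Set.subset_def])

def ageWeight (N i : ℕ) : ℚ :=
  ∑ k ∈ Icc 1 (N - 1),
    (k : ℚ) * (Int.fract ((k : ℚ) * (i : ℚ) / (N : ℚ)) + sigmaFn N k i)

theorem ageSigma_eq (N s : ℕ) (d : ℕ → ℕ) :
    ageSigma N s d = (1 / (N : ℚ)) *
      ∑ i ∈ (Icc 1 (N - 1)).filter (fun i => Nat.gcd i N = s), (d i : ℚ) * ageWeight N i :=
  rfl

/-- The summand of `ageWeight (s * m) (s * j)`, as a function of the residue `k * j % m`. -/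
def residueWeight (m v : ℕ) : ℚ := v / m + if v + 1 = m then 0 else 1

theorem add_one_mod_eq_zero_iff {a m : ℕ} (hm : 0 < m) : (a + 1) % m = 0 ↔ a % m + 1 = m := by
  rcases Nat.lt_or_eq_of_le (Nat.mod_lt a hm) with h | h
  · rw [← Nat.mod_add_mod, Nat.mod_eq_of_lt h]; omega
  · have h : a % m + 1 = m := h
    rw [← Nat.mod_add_mod, h, Nat.mod_self]
    exact iff_of_true rfl rfl

theorem fract_mul_div_mul {k s j m : ℕ} (hs : 0 < s) (hm : 0 < m) :
    Int.fract ((k : ℚ) * ((s * j : ℕ) : ℚ) / ((s * m : ℕ) : ℚ))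
      = ((k * j % m : ℕ) : ℚ) / m := by
  rw [← Int.fract_div_natCast_eq_div_natCast_mod]
  congr 1
  push_cast
  field_simp

theorem sigmaFn_mul {k s j m : ℕ} (hs : 0 < s) (hm : 0 < m) (hc : j.Coprime m) :
    sigmaFn (s * m) k (s * j) = if k * j % m + 1 = m then 0 else 1 := by
  have hmod : (k * (s * j) + Nat.gcd (s * j) (s * m)) % (s * m) = s * ((k * j + 1) % m) := by
    rw [Nat.gcd_mul_left, hc.gcd_eq_one, ← Nat.mul_mod_mul_left]
    ring_nf
  simp only [sigmaFn, hmod, mul_eq_zero, hs.ne', false_or, add_one_mod_eq_zero_iff hm]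

theorem sum_Icc_pred_mul_eq_sum_range (n : ℕ) (f : ℕ → ℚ) :
    ∑ k ∈ Icc 1 (n - 1), (k : ℚ) * f k = ∑ k ∈ range n, (k : ℚ) * f k := by
  refine Finset.sum_subset (fun k hk => ?_) fun k hk hk' => ?_
  · simp only [mem_Icc, mem_range] at hk ⊢; omega
  · obtain rfl : k = 0 := by simp only [mem_Icc, mem_range] at hk hk'; omega
    simp

theorem ageWeight_mul_eq {s m j : ℕ} (hs : 0 < s) (hm : 0 < m) (hc : j.Coprime m) :
    ageWeight (s * m) (s * j)
      = ∑ k ∈ range (s * m), (k : ℚ) * residueWeight m (k * j % m) := by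
  rw [ageWeight, sum_Icc_pred_mul_eq_sum_range]
  refine Finset.sum_congr rfl fun k _ => ?_
  rw [fract_mul_div_mul hs hm, sigmaFn_mul hs hm hc, residueWeight]

theorem ageWeight_eq_sum_Ico {m j : ℕ} (hm : 0 < m) (hc : j.Coprime m) :
    ageWeight m j = ∑ u ∈ Ico 1 m, (u : ℚ) * residueWeight m (u * j % m) := by
  have h := ageWeight_mul_eq zero_lt_one hm hc
  rw [one_mul, one_mul, Finset.range_eq_Ico, Finset.sum_eq_sum_Ico_succ_bot hm] at h
  simpa using h

theorem ageWeight_mul_sub {s m j : ℕ} (hs : 0 < s) (hj : j < m) (hc : j.Coprime m) :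
    ageWeight (s * m) (s * j) - ageWeight (s * m) (s * (m - j))
      = s * (ageWeight m j - ageWeight m (m - j)) := by
  have hm : 0 < m := by omega
  have hc' : (m - j).Coprime m := by rw [Nat.Coprime, Nat.gcd_self_sub_left hj.le]; exact hc
  set H : ℕ → ℚ := fun u => residueWeight m (u * j % m) - residueWeight m (u * (m - j) % m)
  have hH : ∑ u ∈ range m, H u = 0 := by
    rw [Finset.sum_sub_distrib, sum_comp_eq_of_bijOn (bijOn_mul_mod_range hc),
      sum_comp_eq_of_bijOn (bijOn_mul_mod_range hc'), sub_self]
  have hW : ∀ t, 0 < t → ageWeight (t * m) (t * j) - ageWeight (t * m) (t * (m - j))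
      = ∑ k ∈ range (t * m), (k : ℚ) * H (k % m) := fun t ht => by
    simp only [ageWeight_mul_eq ht hm hc, ageWeight_mul_eq ht hm hc', H, Nat.mod_mul_mod,
      ← Finset.sum_sub_distrib, mul_sub]
  have h1 := hW 1 zero_lt_one
  rw [sum_range_mul_mul_mod_of_sum_eq_zero m 1 H hH] at h1
  simp only [one_mul, Nat.cast_one] at h1
  rw [hW s hs, sum_range_mul_mul_mod_of_sum_eq_zero m s H hH, h1]

theorem sum_Ico_two_mul_sub {m : ℕ} (hm : 1 ≤ m) (c : ℚ) :
    ∑ u ∈ Ico 1 m, (2 * (u : ℚ) - c) = (m - 1) * (m - c) := by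
  induction m, hm using Nat.le_induction with
  | base => simp
  | succ n hn ih => rw [Finset.sum_Ico_succ_top hn, ih]; push_cast; ring

theorem sum_Ico_two_mul_sub_sq {m : ℕ} (hm : 1 ≤ m) (c : ℚ) :
    ∑ u ∈ Ico 1 m, (2 * (u : ℚ) - c) ^ 2
      = (m - 1) * (2 * m * (2 * m - 1) / 3 - 2 * c * m + c ^ 2) := by
  induction m, hm using Nat.le_induction with
  | base => simp
  | succ n hn ih => rw [Finset.sum_Ico_succ_top hn, ih]; push_cast; ring

theorem mul_sub_mod_eq_sub_mul_mod {m j u : ℕ} (hj : j ≤ m) (hc : j.Coprime m)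
    (hu : u ∈ Ico 1 m) :
    u * (m - j) % m = m - u * j % m := by
  have hc' : (m - j).Coprime m := by rw [Nat.Coprime, Nat.gcd_self_sub_left hj]; exact hc
  have ha := (bijOn_mul_mod_Ico hc).mapsTo hu
  have hb := (bijOn_mul_mod_Ico hc').mapsTo hu
  simp only [coe_Ico, Set.mem_Ico] at ha hb
  have hsum : (u * j % m + u * (m - j) % m) % m = 0 := by
    rw [← Nat.add_mod, ← Nat.mul_add, Nat.add_sub_cancel' hj, Nat.mul_mod_left]
  have := Nat.eq_of_dvd_of_lt_two_mul (by omega) (Nat.dvd_of_mod_eq_zero hsum) (by omega)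
  omega

theorem residueWeight_sub_residueWeight_sub {m v : ℕ} (hv : v ∈ Ico 1 m) :
    residueWeight m v - residueWeight m (m - v)
      = (2 * v - m) / m + ((if v = 1 then 1 else 0) - if v = m - 1 then 1 else 0) := by
  simp only [mem_Ico] at hv
  have hm : (m : ℚ) ≠ 0 := by norm_cast; omega
  simp only [residueWeight, Nat.cast_sub hv.2.le]
  split_ifs <;> first | omega | (field_simp; ring)

theorem ageWeight_sub_ageWeight_sub_eq {m j : ℕ} (hj : j < m) (hc : j.Coprime m) :
    ageWeight m j - ageWeight m (m - j)
      = (∑ u ∈ Ico 1 m, (2 * (u : ℚ) - m) * (2 * ((u * j % m : ℕ) : ℚ) - m)) / (2 * m)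
        + ((∑ u ∈ Ico 1 m, if u * j % m = 1 then (u : ℚ) else 0)
          - ∑ u ∈ Ico 1 m, if u * j % m = m - 1 then (u : ℚ) else 0) := by
  have hm : 0 < m := by omega
  have hmq : (m : ℚ) ≠ 0 := by norm_cast; omega
  have hc' : (m - j).Coprime m := by rw [Nat.Coprime, Nat.gcd_self_sub_left hj.le]; exact hc
  have hbij := bijOn_mul_mod_Ico hc
  have hcentred : ∑ u ∈ Ico 1 m, (2 * ((u * j % m : ℕ) : ℚ) - m) = 0 := by
    rw [sum_comp_eq_of_bijOn hbij fun v => 2 * (v : ℚ) - m, sum_Ico_two_mul_sub hm, sub_self,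
      mul_zero]
  rw [ageWeight_eq_sum_Ico hm hc, ageWeight_eq_sum_Ico hm hc', ← Finset.sum_sub_distrib,
    ← Finset.sum_sub_distrib]
  calc _ = ∑ u ∈ Ico 1 m, ((2 * (u : ℚ) - m) * (2 * ((u * j % m : ℕ) : ℚ) - m) / (2 * m)
          + (2 * ((u * j % m : ℕ) : ℚ) - m) / 2
          + ((if u * j % m = 1 then (u : ℚ) else 0)
            - if u * j % m = m - 1 then (u : ℚ) else 0)) :=
        Finset.sum_congr rfl fun u hu => by
          rw [mul_sub_mod_eq_sub_mul_mod hj.le hc hu, ← mul_sub,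
            residueWeight_sub_residueWeight_sub (hbij.mapsTo hu)]
          split_ifs <;> field_simp <;> ring
    _ = _ := by
      rw [Finset.sum_add_distrib, Finset.sum_add_distrib, ← Finset.sum_div, ← Finset.sum_div,
        hcentred, Finset.sum_sub_distrib]
      ring

theorem abs_ageWeight_sub_le_of_coprime {m j : ℕ} (hm : 2 ≤ m) (hj : j < m)
    (hc : j.Coprime m) :
    |ageWeight m j - ageWeight m (m - j)| ≤ ((m : ℚ) - 2) * (m + 5) / 6 := by
  have hmq : (0 : ℚ) < m := by norm_cast; omega
  have hbij := bijOn_mul_mod_Ico hc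
  have hcross : |∑ u ∈ Ico 1 m, (2 * (u : ℚ) - m) * (2 * ((u * j % m : ℕ) : ℚ) - m)|
      ≤ m * (m - 1) * (m - 2) / 3 :=
    (abs_sum_mul_comp_le_sum_sq hbij fun u => 2 * (u : ℚ) - m).trans_eq
      (by rw [sum_Ico_two_mul_sub_sq (by omega)]; ring)
  have hpreimage : ∀ c ∈ Ico 1 m,
      1 ≤ (∑ u ∈ Ico 1 m, if u * j % m = c then (u : ℚ) else 0)
      ∧ (∑ u ∈ Ico 1 m, if u * j % m = c then (u : ℚ) else 0) ≤ m - 1 := by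
    intro c hc
    obtain ⟨u, hu, rfl⟩ := hbij.surjOn hc
    rw [sum_ite_apply_eq_of_injOn hbij.injOn hu]
    simp only [coe_Ico, Set.mem_Ico] at hu
    exact ⟨by exact_mod_cast hu.1, by rw [le_sub_iff_add_le]; exact_mod_cast hu.2⟩
  have hfrac : |(∑ u ∈ Ico 1 m, (2 * (u : ℚ) - m) * (2 * ((u * j % m : ℕ) : ℚ) - m))
      / (2 * m)| ≤ (m - 1) * (m - 2) / 6 := by
    rw [abs_div, abs_of_pos (by positivity : (0 : ℚ) < 2 * m), div_le_iff₀ (by positivity)]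
    exact hcross.trans_eq (by ring)
  obtain ⟨h1, h1'⟩ := hpreimage 1 (by simp only [mem_Ico]; omega)
  obtain ⟨h2, h2'⟩ := hpreimage (m - 1) (by simp only [mem_Ico]; omega)
  have hind : |(∑ u ∈ Ico 1 m, if u * j % m = 1 then (u : ℚ) else 0)
      - ∑ u ∈ Ico 1 m, if u * j % m = m - 1 then (u : ℚ) else 0| ≤ m - 2 :=
    abs_sub_le_iff.mpr ⟨by linarith, by linarith⟩
  rw [ageWeight_sub_ageWeight_sub_eq hj hc]
  exact (abs_add_le _ _).trans (by linarith)

theorem abs_ageWeight_sub_le {N i : ℕ} (hi : 0 < i) (hiN : i < N) :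
    |ageWeight N i - ageWeight N (N - i)|
      ≤ ((N : ℚ) - 2 * Nat.gcd i N) * (N / Nat.gcd i N + 5) / 6 := by
  set s := Nat.gcd i N
  have hs : 0 < s := Nat.gcd_pos_of_pos_left N hi
  have hc : (i / s).Coprime (N / s) := Nat.coprime_div_gcd_div_gcd hs
  set j := i / s
  set m := N / s
  have hi' : i = s * j := (Nat.mul_div_cancel' (Nat.gcd_dvd_left i N)).symm
  have hN : N = s * m := (Nat.mul_div_cancel' (Nat.gcd_dvd_right i N)).symm
  have hjm : j < m := Nat.lt_of_mul_lt_mul_left (hi' ▸ hN ▸ hiN)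
  have hj : 0 < j := Nat.pos_of_mul_pos_left (hi' ▸ hi)
  have hdiff : ageWeight N i - ageWeight N (N - i)
      = s * (ageWeight m j - ageWeight m (m - j)) := by
    rw [← ageWeight_mul_sub hs hjm hc, Nat.mul_sub, ← hi', ← hN]
  have hNq : (N : ℚ) = s * m := by rw [hN]; push_cast; ring
  rw [hdiff, abs_mul, Nat.abs_cast, hNq, mul_div_cancel_left₀ _ (by positivity)]
  calc (s : ℚ) * |ageWeight m j - ageWeight m (m - j)| ≤ s * ((m - 2) * (m + 5) / 6) :=
        mul_le_mul_of_nonneg_left (abs_ageWeight_sub_le_of_coprime (by omega) hjm hc)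
          (by positivity)
    _ = _ := by ring

theorem ageSigma_twin (N s : ℕ) (d : ℕ → ℕ) :
    ageSigma N s (twin N d) = (1 / (N : ℚ)) *
      ∑ i ∈ (Icc 1 (N - 1)).filter (fun i => Nat.gcd i N = s),
        (d i : ℚ) * ageWeight N (N - i) := by
  have hmem : ∀ i ∈ (Icc 1 (N - 1)).filter (fun i => Nat.gcd i N = s),
      N - i ∈ (Icc 1 (N - 1)).filter (fun i => Nat.gcd i N = s) := by
    intro i hi
    simp only [mem_filter, mem_Icc] at hi ⊢
    exact ⟨by omega, by rw [Nat.gcd_self_sub_left (by omega)]; exact hi.2⟩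
  have hinv : ∀ i ∈ (Icc 1 (N - 1)).filter (fun i => Nat.gcd i N = s), N - (N - i) = i := by
    intro i hi
    simp only [mem_filter, mem_Icc] at hi
    omega
  rw [ageSigma_eq]
  congr 1
  exact Finset.sum_nbij' (N - ·) (N - ·) hmem hmem hinv hinv fun i hi => by
    simp only [twin, hinv i hi]

theorem abs_ageSigma_sub_le_general (N : ℕ) (d : ℕ → ℕ) (s : ℕ) :
    |ageSigma N s d - ageSigma N s (twin N d)|
      ≤ ((N : ℚ) - 2 * (s : ℚ)) * ((N : ℚ) / (s : ℚ) + 5) / (6 * (N : ℚ))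
        * ∑ i ∈ (Icc 1 (N - 1)).filter (fun i => Nat.gcd i N = s), (d i : ℚ) := by
  calc |ageSigma N s d - ageSigma N s (twin N d)|
      = |(1 / (N : ℚ)) * ∑ i ∈ (Icc 1 (N - 1)).filter (fun i => Nat.gcd i N = s),
          (d i : ℚ) * (ageWeight N i - ageWeight N (N - i))| := by
        rw [ageSigma_eq, ageSigma_twin, ← mul_sub, ← Finset.sum_sub_distrib]
        simp only [mul_sub]
    _ ≤ (1 / (N : ℚ)) * ∑ i ∈ (Icc 1 (N - 1)).filter (fun i => Nat.gcd i N = s),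
          (d i : ℚ) * |ageWeight N i - ageWeight N (N - i)| := by
        rw [abs_mul, abs_of_nonneg (by positivity)]
        gcongr
        refine (Finset.abs_sum_le_sum_abs _ _).trans_eq (Finset.sum_congr rfl fun i _ => ?_)
        rw [abs_mul, Nat.abs_cast]
    _ ≤ (1 / (N : ℚ)) * ∑ i ∈ (Icc 1 (N - 1)).filter (fun i => Nat.gcd i N = s),
          (d i : ℚ) * (((N : ℚ) - 2 * s) * (N / s + 5) / 6) := by
        gcongr with i hi
        simp only [mem_filter, mem_Icc] at hi
        rw [← hi.2]
        exact abs_ageWeight_sub_le (by omega) (by omega)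
    _ = _ := by rw [← Finset.sum_mul]; ring

/-- For every `(g,n)`-admissible datum, its twin, and every proper
divisor `σ` of `N`,
`|a_σ(Y) − a_σ(Y')| ≤ ((N − 2σ)(N/σ + 5))/(6N) · Σ_{gcd(i,N)=σ} d_i`. -/
theorem abs_ageSigma_sub_le (g n g' N : ℕ) (d a : ℕ → ℕ) (s : ℕ)
    (hgn : 2 < 2 * g + n) (hadm : Admissible g n g' N d a)
    (hdvd : s ∣ N) (hne : s ≠ N) :
    |ageSigma N s d - ageSigma N s (twin N d)|
      ≤ ((N : ℚ) - 2 * (s : ℚ)) * ((N : ℚ) / (s : ℚ) + 5) / (6 * (N : ℚ))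
        * ∑ i ∈ (Icc 1 (N - 1)).filter (fun i => Nat.gcd i N = s), (d i : ℚ) :=
  abs_ageSigma_sub_le_general N d s
end

section
/- Let N ≥ 2 and let σ be a proper divisor of N (σ | N, σ ≠ N). Then |Σ_{k=1}^{N−1} k·({σk/N} − {(N−σ)k/N})| = (1/6)(N/σ − 1)(N − 2σ). -/
/-! Write `N = σ m`. Then `σk/N = k/m` and `(N-σ)k/N ≡ -k/m (mod 1)`, and `{x} - {-x}` is `0`
for integral `x` and `2{x} - 1` otherwise, so the summand of `k = q m + r` (`r < m`) is
`(q m + r)(2r/m - 1)` for `r ≠ 0` and `0` for `r = 0`. Since `∑_{0<r<m} (2r/m - 1) = 0`, the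
contribution of `q` cancels, and each of the `σ` blocks adds
`∑_{0<r<m} r(2r/m - 1) = (m-1)(m-2)/6`. -/

open Finset

theorem sum_range_mul_eq_sum_sum {M : Type*} [AddCommMonoid M] (f : ℕ → M) (s m : ℕ) :
    ∑ k ∈ range (s * m), f k = ∑ q ∈ range s, ∑ r ∈ range m, f (q * m + r) := by
  induction s with
  | zero => simp
  | succ s ih => rw [Nat.succ_mul, sum_range_add, ih, sum_range_succ]

theorem sum_Icc_one_sub_one_eq_sum_range {M : Type*} [AddCommMonoid M] {f : ℕ → M}
    (hf : f 0 = 0) (n : ℕ) : ∑ k ∈ Icc 1 (n - 1), f k = ∑ k ∈ range n, f k := by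
  refine sum_subset (fun k hk ↦ ?_) fun k hk hk' ↦ ?_
  · simp only [mem_Icc, mem_range] at hk ⊢; omega
  · simp only [mem_Icc, mem_range] at hk hk'
    obtain rfl : k = 0 := by omega
    exact hf

theorem sum_range_natCast_mul_two {R : Type*} [CommRing R] (n : ℕ) :
    (∑ r ∈ range n, (r : R)) * 2 = n * (n - 1) := by
  induction n with
  | zero => simp
  | succ n ih => rw [sum_range_succ, add_mul, ih]; push_cast; ring

theorem sum_range_natCast_sq_mul_six {R : Type*} [CommRing R] (n : ℕ) :
    (∑ r ∈ range n, (r : R) ^ 2) * 6 = n * (n - 1) * (2 * n - 1) := by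
  induction n with
  | zero => simp
  | succ n ih => rw [sum_range_succ, add_mul, ih]; push_cast; ring

theorem fract_sub_fract_neg {K : Type*} [Field K] [LinearOrder K] [IsStrictOrderedRing K]
    [FloorRing K] (x : K) :
    Int.fract x - Int.fract (-x) = if Int.fract x = 0 then 0 else 2 * Int.fract x - 1 := by
  split_ifs with hx
  · rw [hx, Int.fract_neg_eq_zero.2 hx]; ring
  · rw [Int.fract_neg hx]; ring

theorem fract_natCast_mul_add_div {K : Type*} [Field K] [LinearOrder K] [IsStrictOrderedRing K]
    [FloorRing K] (q : ℕ) {m r : ℕ} (hr : r < m) :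
    Int.fract (((q * m + r : ℕ) : K) / m) = r / m := by
  rw [Int.fract_div_natCast_eq_div_natCast_mod, Nat.mul_add_mod_self_right, Nat.mod_eq_of_lt hr]

theorem sum_range_natCast_mul_fract_sub_fract_neg (q : ℕ) {m : ℕ} (hm : 0 < m) :
    ∑ r ∈ range m, ((q * m + r : ℕ) : ℚ) *
      (Int.fract (((q * m + r : ℕ) : ℚ) / m) - Int.fract (-(((q * m + r : ℕ) : ℚ) / m)))
      = (m - 1) * (m - 2) / 6 := by
  obtain ⟨n, rfl⟩ : ∃ n, m = n + 1 := ⟨m - 1, by omega⟩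
  have term : ∀ r ∈ range n, ((q * (n + 1) + (r + 1) : ℕ) : ℚ) *
      (Int.fract (((q * (n + 1) + (r + 1) : ℕ) : ℚ) / (n + 1 : ℕ))
        - Int.fract (-(((q * (n + 1) + (r + 1) : ℕ) : ℚ) / (n + 1 : ℕ))))
      = (q * (n + 1) + r + 1) * (2 * r + 1 - n) / (n + 1) := by
    intro r hr
    have hr' : r + 1 < n + 1 := by simpa using hr
    rw [fract_sub_fract_neg, fract_natCast_mul_add_div q hr', if_neg (by positivity)]
    field_simp
    push_cast
    ring
  rw [sum_range_succ', sum_congr rfl term, ← sum_div, fract_sub_fract_neg,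
    fract_natCast_mul_add_div q hm, if_pos (by simp), mul_zero, add_zero]
  have hsum_id := sum_range_natCast_mul_two (R := ℚ) n
  have hsum_sq := sum_range_natCast_sq_mul_six (R := ℚ) n
  have expand : ∀ r ∈ range n, ((q : ℚ) * (n + 1) + r + 1) * (2 * r + 1 - n)
      = 2 * (r : ℚ) ^ 2 + (2 * q * (n + 1) + 3 - n) * r + (q * (n + 1) + 1) * (1 - n) := by
    intro r _; ring
  rw [sum_congr rfl expand, sum_add_distrib, sum_add_distrib, ← mul_sum, ← mul_sum, sum_const,
    card_range, nsmul_eq_mul]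
  push_cast
  rw [div_eq_iff (by positivity)]
  linear_combination (1 / 3 : ℚ) * hsum_sq + ((2 * q * (n + 1) + 3 - n) / 2 : ℚ) * hsum_id

/-- For `N ≥ 2` and a proper divisor `σ` of `N`,
`|Σ_{k=1}^{N−1} k·({σk/N} − {(N−σ)k/N})| = (1/6)(N/σ − 1)(N − 2σ)`. -/
theorem abs_sum_fract_diff_eq (N s : ℕ) (hN : 2 ≤ N) (hdvd : s ∣ N) (hne : s ≠ N) :
    |∑ k ∈ Finset.Icc 1 (N - 1), (k : ℚ) *
        (Int.fract ((s : ℚ) * (k : ℚ) / (N : ℚ))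
          - Int.fract (((N : ℚ) - (s : ℚ)) * (k : ℚ) / (N : ℚ)))|
      = 1 / 6 * ((N : ℚ) / (s : ℚ) - 1) * ((N : ℚ) - 2 * (s : ℚ)) := by
  obtain ⟨m, rfl⟩ := hdvd
  have hs : s ≠ 0 := by rintro rfl; omega
  have hm : 2 ≤ m := by
    rcases m with _ | _ | m
    · omega
    · simp at hne
    · omega
  have hsQ : (s : ℚ) ≠ 0 := Nat.cast_ne_zero.2 hs
  have hmQ : (m : ℚ) ≠ 0 := by positivity
  have summand : ∀ k : ℕ, Int.fract ((s : ℚ) * k / ((s * m : ℕ) : ℚ))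
      - Int.fract ((((s * m : ℕ) : ℚ) - s) * k / ((s * m : ℕ) : ℚ))
      = Int.fract ((k : ℚ) / m) - Int.fract (-((k : ℚ) / m)) := by
    intro k
    have h1 : (s : ℚ) * k / ((s * m : ℕ) : ℚ) = k / m := by push_cast; field_simp
    have h2 : (((s * m : ℕ) : ℚ) - s) * k / ((s * m : ℕ) : ℚ) = k + -((k : ℚ) / m) := by
      push_cast; field_simp; ring
    rw [h1, h2, Int.fract_natCast_add]
  have hsum : ∑ k ∈ Icc 1 (s * m - 1), (k : ℚ) *
      (Int.fract ((k : ℚ) / m) - Int.fract (-((k : ℚ) / m))) = s * ((m - 1) * (m - 2) / 6) := by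
    rw [sum_Icc_one_sub_one_eq_sum_range (by simp), sum_range_mul_eq_sum_sum,
      sum_congr rfl fun q _ ↦ sum_range_natCast_mul_fract_sub_fract_neg q (by omega),
      sum_const, card_range, nsmul_eq_mul]
  rw [sum_congr rfl fun k _ ↦ by rw [summand k], hsum, abs_of_nonneg (by
    have : (2 : ℚ) ≤ m := by exact_mod_cast hm
    exact mul_nonneg (Nat.cast_nonneg s) (by nlinarith))]
  push_cast
  field_simp
end

section
/- Let N ≥ 2, let σ be a proper divisor of N, and let i with 1 ≤ i ≤ N − 1 satisfy gcd(i,N) = σ. Then |Σ_{k=1}^{N−1} k·(σ(k,i) − σ(k,N−i))| ≤ N − 2σ, and the maximum value N − 2σ is attained exactly when i = σ or i = N − σ. -/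
/-!
Write `N = s n` and `i = s a` with `a` a unit modulo `n`, and let `r ∈ [1, n)` represent
`a⁻¹ mod n`. Then `σ(k, i) = 0` exactly when `k ≡ -r` and `σ(k, N - i) = 0` exactly when
`k ≡ r (mod n)`, so the sum is the difference of the sums of `k < N` over these two residue
classes, namely `s (r - (n - r)) = s (2r - n)`. Since `1 ≤ r ≤ n - 1` its absolute value is
at most `s (n - 2) = N - 2s`, with equality iff `r ≡ ±1`, i.e. `a ≡ ±1 (mod n)`.
-/

open Finset

namespace ZMod

variable {n : ℕ}

theorem natCast_eq_iff_eq_val_of_lt [NeZero n] {t : ℕ} (ht : t < n) (x : ZMod n) :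
    (t : ZMod n) = x ↔ t = x.val := by
  rw [← natCast_zmod_val x, val_natCast_of_lt (val_lt x), natCast_eq_natCast_iff',
    Nat.mod_eq_of_lt ht, Nat.mod_eq_of_lt (val_lt x)]

theorem val_eq_sub_one_iff [NeZero n] (x : ZMod n) : x.val = n - 1 ↔ x = -1 := by
  obtain ⟨m, rfl⟩ : ∃ m, n = m + 1 := Nat.exists_eq_add_one.mpr (NeZero.pos n)
  rw [Nat.add_sub_cancel]
  exact (val_injective _).eq_iff' (val_neg_one m)

theorem val_eq_one_iff_of_mul_eq_one (hn : 1 < n) {x y : ZMod n} (h : x * y = 1) :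
    x.val = 1 ↔ y.val = 1 := by
  rw [val_eq_one hn, val_eq_one hn, eq_one_iff_eq_one_of_mul_eq_one h]

theorem val_eq_sub_one_iff_of_mul_eq_one [NeZero n] {x y : ZMod n} (h : x * y = 1) :
    x.val = n - 1 ↔ y.val = n - 1 := by
  have h' : -x * -y = 1 := by rw [neg_mul_neg, h]
  rw [val_eq_sub_one_iff, val_eq_sub_one_iff, ← neg_eq_iff_eq_neg, ← neg_eq_iff_eq_neg,
    eq_one_iff_eq_one_of_mul_eq_one h']

end ZMod

theorem sum_range_mul_filter_natCast_eq {n : ℕ} [NeZero n] (s : ℕ) (x : ZMod n) :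
    ∑ k ∈ range (s * n) with ((k : ℕ) : ZMod n) = x, k
      = ∑ j ∈ range s, (j * n + x.val) := by
  induction s with
  | zero => simp
  | succ s ih =>
    have block : ∑ t ∈ range n, (if ((s * n + t : ℕ) : ZMod n) = x then s * n + t else 0)
        = s * n + x.val := by
      rw [sum_congr rfl fun t ht => if_congr (by
          rw [Nat.cast_add, Nat.cast_mul, ZMod.natCast_self, mul_zero, zero_add,
            ZMod.natCast_eq_iff_eq_val_of_lt (mem_range.mp ht)]) rfl rfl,
        sum_ite_eq' (range n) x.val, if_pos (mem_range.mpr (ZMod.val_lt x))]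
    rw [sum_filter] at ih ⊢
    rw [Nat.succ_mul, sum_range_add, ih, block, sum_range_succ]

theorem sum_Icc_mul_ite_sub_ite {n : ℕ} [NeZero n] (s : ℕ) (x y : ZMod n) :
    ∑ k ∈ Icc 1 (s * n - 1),
        (k : ℚ) * ((if (k : ZMod n) = x then 0 else 1) - (if (k : ZMod n) = y then 0 else 1))
      = s * ((y.val : ℚ) - x.val) := by
  have hterm : ∀ k : ℕ,
      (k : ℚ) * ((if (k : ZMod n) = x then 0 else 1) - (if (k : ZMod n) = y then 0 else 1))
        = (if (k : ZMod n) = y then (k : ℚ) else 0)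
          - (if (k : ZMod n) = x then (k : ℚ) else 0) := by
    intro k
    split_ifs <;> ring
  have hrange : Icc 1 (s * n - 1) ⊆ range (s * n) := fun k hk => by
    simp only [mem_Icc, mem_range] at hk ⊢
    omega
  rw [sum_subset hrange fun k hk hk' => by
      simp only [mem_Icc, mem_range] at hk hk'
      simp [show k = 0 by omega],
    sum_congr rfl fun k _ => hterm k, sum_sub_distrib, ← sum_filter, ← sum_filter]
  rw [← Nat.cast_sum, ← Nat.cast_sum, sum_range_mul_filter_natCast_eq,
    sum_range_mul_filter_natCast_eq]
  push_cast
  rw [← sum_sub_distrib]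
  simp only [add_sub_add_left_eq_sub, sum_const, card_range, nsmul_eq_mul]

theorem sigmaFn_mul_mul {s n b : ℕ} (hs : 0 < s) (hb : b.Coprime n) (k : ℕ) :
    sigmaFn (s * n) k (s * b) = if (k : ZMod n) * b = -1 then 0 else 1 := by
  have hgcd : Nat.gcd (s * b) (s * n) = s := by rw [Nat.gcd_mul_left, hb, mul_one]
  have hfactor : k * (s * b) + s = s * (k * b + 1) := by ring
  have hcond :
      (k * (s * b) + Nat.gcd (s * b) (s * n)) % (s * n) = 0 ↔ (k : ZMod n) * b = -1 := by
    rw [hgcd, hfactor, Nat.mul_mod_mul_left, mul_eq_zero, or_iff_right hs.ne',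
      ← Nat.dvd_iff_mod_eq_zero, ← ZMod.natCast_eq_zero_iff, eq_neg_iff_add_eq_zero]
    push_cast
    rfl
  exact if_congr hcond rfl rfl

theorem sum_Icc_mul_sigmaFn_sub_sigmaFn {s n a : ℕ} (hs : 0 < s) (ha : 0 < a) (han : a < n)
    (hcop : a.Coprime n) :
    ∑ k ∈ Icc 1 (s * n - 1),
        (k : ℚ) * (sigmaFn (s * n) k (s * a) - sigmaFn (s * n) k (s * n - s * a))
      = s * (2 * ((a : ZMod n)⁻¹).val - n) := by
  have : Fact (1 < n) := ⟨by omega⟩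
  set x : ZMod n := (a : ZMod n)⁻¹ with hx
  have hx0 : x ≠ 0 := right_ne_zero_of_mul_eq_one (ZMod.coe_mul_inv_eq_one a hcop)
  have hA (k : ZMod n) : k * a = -1 ↔ k = -x := by
    rw [hx, ← ZMod.coe_unitOfCoprime a hcop, ZMod.inv_coe_unit, ← Units.eq_mul_inv_iff_mul_eq,
      neg_one_mul]
  have hB (k : ZMod n) : k * ((n - a : ℕ) : ZMod n) = -1 ↔ k = x := by
    rw [Nat.cast_sub han.le, ZMod.natCast_self, zero_sub, mul_neg, neg_inj, hx,
      ← ZMod.coe_unitOfCoprime a hcop, ZMod.inv_coe_unit, ← Units.eq_mul_inv_iff_mul_eq,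
      one_mul]
  rw [← Nat.mul_sub]
  simp only [sigmaFn_mul_mul hs hcop,
    sigmaFn_mul_mul hs ((Nat.coprime_self_sub_left han.le).mpr hcop), hA, hB]
  rw [sum_Icc_mul_ite_sub_ite, ZMod.neg_val, if_neg hx0, Nat.cast_sub (ZMod.val_lt x).le]
  ring

theorem abs_mul_two_mul_sub_le_and_eq_iff {s r n : ℕ} (hs : 0 < s) (hr : 0 < r) (hrn : r < n) :
    |(s : ℚ) * (2 * r - n)| ≤ s * n - 2 * s ∧
      (|(s : ℚ) * (2 * r - n)| = s * n - 2 * s ↔ r = 1 ∨ r = n - 1) := by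
  have hs' : (0 : ℚ) < s := by exact_mod_cast hs
  have hr' : (1 : ℚ) ≤ r := by exact_mod_cast hr
  have hrn' : (r : ℚ) + 1 ≤ n := by exact_mod_cast hrn
  rw [abs_mul, abs_of_pos hs', show (s : ℚ) * n - 2 * s = s * (n - 2) by ring,
    mul_le_mul_iff_right₀ hs', mul_right_inj' hs'.ne', abs_le, abs_eq (by linarith)]
  have hr1 : r = 1 ↔ (r : ℚ) = 1 := by norm_cast
  have hrn1 : r = n - 1 ↔ (r : ℚ) + 1 = n := by norm_cast; omega
  rw [hr1, hrn1, or_comm]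
  exact ⟨⟨by linarith, by linarith⟩,
    or_congr ⟨fun h => by linarith, fun h => by linarith⟩
      ⟨fun h => by linarith, fun h => by linarith⟩⟩

theorem abs_sum_sigma_diff_le_general (N s i : ℕ) (hdvd : s ∣ N)
    (hi1 : 1 ≤ i) (hi2 : i ≤ N - 1) (hgcd : Nat.gcd i N = s) :
    |∑ k ∈ Finset.Icc 1 (N - 1), (k : ℚ) * (sigmaFn N k i - sigmaFn N k (N - i))|
      ≤ (N : ℚ) - 2 * (s : ℚ) ∧
    (|∑ k ∈ Finset.Icc 1 (N - 1), (k : ℚ) * (sigmaFn N k i - sigmaFn N k (N - i))|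
        = (N : ℚ) - 2 * (s : ℚ) ↔ i = s ∨ i = N - s) := by
  obtain ⟨n, rfl⟩ := hdvd
  obtain ⟨a, rfl⟩ : s ∣ i := hgcd ▸ Nat.gcd_dvd_left _ _
  have hs : 0 < s := Nat.pos_of_ne_zero fun h => by simp [h] at hi1
  have ha : 0 < a := Nat.pos_of_ne_zero fun h => by simp [h] at hi1
  have han : a < n := lt_of_not_ge fun h => by have := Nat.mul_le_mul_left s h; omega
  have hcop : a.Coprime n := by rwa [Nat.gcd_mul_left, Nat.mul_eq_left hs.ne'] at hgcd
  have hinv : (a : ZMod n) * (a : ZMod n)⁻¹ = 1 := ZMod.coe_mul_inv_eq_one a hcop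
  have hn : 1 < n := by omega
  have : Fact (1 < n) := ⟨hn⟩
  have hr := abs_mul_two_mul_sub_le_and_eq_iff hs
    (Nat.pos_of_ne_zero ((ZMod.val_ne_zero _).mpr (right_ne_zero_of_mul_eq_one hinv)))
    (ZMod.val_lt (a : ZMod n)⁻¹)
  rw [sum_Icc_mul_sigmaFn_sub_sigmaFn hs ha han hcop, Nat.cast_mul]
  refine ⟨hr.1, hr.2.trans (or_congr ?_ ?_)⟩
  · rw [← ZMod.val_eq_one_iff_of_mul_eq_one hn hinv, ZMod.val_natCast_of_lt han,
      Nat.mul_eq_left hs.ne']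
  · rw [← ZMod.val_eq_sub_one_iff_of_mul_eq_one hinv, ZMod.val_natCast_of_lt han,
      ← Nat.mul_sub_one, Nat.mul_left_cancel_iff hs]

/-- For `N ≥ 2`, a proper divisor `σ` of `N`, and `1 ≤ i ≤ N−1` with
`gcd(i,N) = σ`, `|Σ_{k=1}^{N−1} k·(σ(k,i) − σ(k,N−i))| ≤ N − 2σ`, with equality
exactly when `i = σ` or `i = N − σ`. -/
theorem abs_sum_sigma_diff_le (N s i : ℕ) (hN : 2 ≤ N) (hdvd : s ∣ N) (hne : s ≠ N)
    (hi1 : 1 ≤ i) (hi2 : i ≤ N - 1) (hgcd : Nat.gcd i N = s) :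
    |∑ k ∈ Finset.Icc 1 (N - 1), (k : ℚ) * (sigmaFn N k i - sigmaFn N k (N - i))|
      ≤ (N : ℚ) - 2 * (s : ℚ) ∧
    (|∑ k ∈ Finset.Icc 1 (N - 1), (k : ℚ) * (sigmaFn N k i - sigmaFn N k (N - i))|
        = (N : ℚ) - 2 * (s : ℚ) ↔ i = s ∨ i = N - s) :=
  abs_sum_sigma_diff_le_general N s i hdvd hi1 hi2 hgcd
end

section
/- Let N ≥ 2 and let d_1, …, d_{N−1} and a_1, …, a_{N−1} be nonnegative integers with a_i ≤ d_i for all i and a_i = 0 whenever gcd(i,N) ≠ 1. Then −((N − 2)/N)·Σ_{i: gcd(i,N)=1} a_i + Σ_{σ proper divisor of N} f_N(σ)·Σ_{i: gcd(i,N)=σ} d_i ≥ 0. (This uses that f_N(1) − (N−2)/N = (N−2)(5N−11)/(6N) ≥ 0 and f_N(σ) ≥ 0 for every proper divisor σ of N.) -/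
/-!
Writing `N = σk`, one has `f_N(σ) = (6(σ − 1)k(k − 1) + 5(k − 1)(k − 2))/(6k) ≥ 0`, and in
particular `f_N(1) − (N − 2)/N = (N − 2)(5N − 11)/(6N) ≥ 0`. Since `a_i ≤ d_i`, the negative
term is absorbed by the `σ = 1` summand, and all other summands are nonnegative.
-/

open Finset

def fNQ (N s : ℕ) : ℚ :=
  ((N : ℚ) - (s : ℚ) - 1) - ((N : ℚ) - 2 * (s : ℚ)) * ((N : ℚ) / (s : ℚ) + 5) / (6 * (N : ℚ))

theorem fNQ_mul (s k : ℕ) (hs : s ≠ 0) (hk : k ≠ 0) :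
    fNQ (s * k) s =
      (6 * ((s : ℚ) - 1) * k * (k - 1) + 5 * ((k : ℚ) - 1) * (k - 2)) / (6 * k) := by
  unfold fNQ
  push_cast
  field_simp
  ring

theorem fNQ_nonneg_of_dvd {N s : ℕ} (hN : N ≠ 0) (hs : s ∣ N) : 0 ≤ fNQ N s := by
  obtain ⟨k, rfl⟩ := hs
  have hs0 : s ≠ 0 := left_ne_zero_of_mul hN
  have hk0 : k ≠ 0 := right_ne_zero_of_mul hN
  have hs1 : (1 : ℚ) ≤ s := by exact_mod_cast Nat.one_le_iff_ne_zero.2 hs0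
  have hk1 : (1 : ℚ) ≤ k := by exact_mod_cast Nat.one_le_iff_ne_zero.2 hk0
  have hkk : 0 ≤ ((k : ℚ) - 1) * (k - 2) := by
    rcases Nat.lt_or_ge k 2 with hk | hk
    · rw [show k = 1 by omega]; norm_num
    · have : (2 : ℚ) ≤ k := by exact_mod_cast hk
      nlinarith
  rw [fNQ_mul s k hs0 hk0]
  have hsk : 0 ≤ ((s : ℚ) - 1) * k * (k - 1) :=
    mul_nonneg (mul_nonneg (sub_nonneg.2 hs1) k.cast_nonneg) (sub_nonneg.2 hk1)
  exact div_nonneg (by linarith) (by positivity)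

theorem div_le_fNQ_one {N : ℕ} (hN : N ≠ 0) : ((N : ℚ) - 2) / N ≤ fNQ N 1 := by
  have hN1 : (1 : ℚ) ≤ N := by exact_mod_cast Nat.one_le_iff_ne_zero.2 hN
  have key : fNQ N 1 - ((N : ℚ) - 2) / N = ((N : ℚ) - 2) * (5 * N - 11) / (6 * N) := by
    rw [← one_mul N, fNQ_mul 1 N one_ne_zero hN]
    push_cast
    field_simp
    ring
  -- `(N − 2)(5N − 11) ≥ 0` on the integers, as no integer lies strictly between `2` and `11/5`
  have hprod : 0 ≤ ((N : ℚ) - 2) * (5 * N - 11) := by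
    rcases Nat.lt_or_ge N 3 with h | h
    · interval_cases N <;> norm_num
    · have : (3 : ℚ) ≤ N := by exact_mod_cast h
      nlinarith
  have := div_nonneg hprod (by positivity : (0 : ℚ) ≤ 6 * N)
  linarith

theorem lhs_nonneg_general (N : ℕ) (d a : ℕ → ℕ) (hN : 2 ≤ N)
    (had : ∀ i ∈ Icc 1 (N - 1), a i ≤ d i) :
    0 ≤ -(((N : ℚ) - 2) / (N : ℚ))
          * ∑ i ∈ (Icc 1 (N - 1)).filter (fun i => Nat.gcd i N = 1), (a i : ℚ)
        + ∑ s ∈ N.properDivisors, fNQ N s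
          * ∑ i ∈ (Icc 1 (N - 1)).filter (fun i => Nat.gcd i N = s), (d i : ℚ) := by
  have hN0 : N ≠ 0 := by omega
  rw [← insert_erase (Nat.one_mem_properDivisors_iff_one_lt.2 hN),
    sum_insert (notMem_erase _ _)]
  set A := ∑ i ∈ (Icc 1 (N - 1)).filter (fun i => Nat.gcd i N = 1), (a i : ℚ)
  set D := ∑ i ∈ (Icc 1 (N - 1)).filter (fun i => Nat.gcd i N = 1), (d i : ℚ)
  have hAD : A ≤ D := sum_le_sum fun i hi => by exact_mod_cast had i (mem_filter.1 hi).1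
  have hD : 0 ≤ D := sum_nonneg fun i _ => by positivity
  have hrest : 0 ≤ ∑ s ∈ N.properDivisors.erase 1, fNQ N s
      * ∑ i ∈ (Icc 1 (N - 1)).filter (fun i => Nat.gcd i N = s), (d i : ℚ) :=
    sum_nonneg fun s hs => mul_nonneg
      (fNQ_nonneg_of_dvd hN0 (Nat.mem_properDivisors.1 (mem_of_mem_erase hs)).1)
      (sum_nonneg fun i _ => by positivity)
  have hN2 : (2 : ℚ) ≤ N := by exact_mod_cast hN
  have hc : 0 ≤ ((N : ℚ) - 2) / N := div_nonneg (by linarith) N.cast_nonneg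
  have h1 := mul_le_mul_of_nonneg_left hAD hc
  have h2 := mul_le_mul_of_nonneg_right (div_le_fNQ_one hN0) hD
  linarith

/-- For `N ≥ 2` and nonnegative integers `d_i`, `a_i` with `a_i ≤ d_i`
and `a_i = 0` whenever `gcd(i,N) ≠ 1`,
`−((N − 2)/N)·Σ_{gcd(i,N)=1} a_i + Σ_{σ proper divisor of N} f_N(σ)·Σ_{gcd(i,N)=σ} d_i ≥ 0`. -/
theorem lhs_nonneg (N : ℕ) (d a : ℕ → ℕ) (hN : 2 ≤ N)
    (had : ∀ i ∈ Icc 1 (N - 1), a i ≤ d i)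
    (ha0 : ∀ i ∈ Icc 1 (N - 1), Nat.gcd i N ≠ 1 → a i = 0) :
    0 ≤ -(((N : ℚ) - 2) / (N : ℚ))
          * ∑ i ∈ (Icc 1 (N - 1)).filter (fun i => Nat.gcd i N = 1), (a i : ℚ)
        + ∑ s ∈ N.properDivisors, fNQ N s
          * ∑ i ∈ (Icc 1 (N - 1)).filter (fun i => Nat.gcd i N = s), (d i : ℚ) :=
  lhs_nonneg_general N d a hN had
end
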